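/- For 0 < α < 1, 0 < x < 1, define f_α(x) = (1/Γ(1-α))( (α/2)(x(1-x))^{-α-1} + (1-2α)(x(1-x))^{-α} ). Then Ford's splitting weights q̃_n(k) = [Γ_α(k) Γ_α(n-k) / Γ_α(n)] · ( (α/2) binom(n,k) + (1-2α) binom(n-2, k-1) ), with Γ_α(n) = Γ(n-α)/Γ(1-α), satisfy n^{1+α} q̃_n(⌊xn⌋) → f_α(x) as n → ∞ for every fixed x ∈ (0,1). -/

import Mathlib

open Filter

private lemma gautschi_upper {t a : ℝ} (ht : 0 < t) (ha0 : 0 ≤ a) (ha1 : a ≤ 1) :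
    Real.Gamma (t + a) ≤ Real.Gamma t * t ^ a := by
  have h := Real.convexOn_log_Gamma.2 (Set.mem_Ioi.2 ht)
    (Set.mem_Ioi.2 (by linarith : (0:ℝ) < t + 1)) (by linarith : (0:ℝ) ≤ 1 - a) ha0 (by ring)
  simp only [smul_eq_mul, Function.comp_apply] at h
  rw [show (1 - a) * t + a * (t + 1) = t + a by ring] at h
  have hΓt : 0 < Real.Gamma t := Real.Gamma_pos_of_pos ht
  have hΓta : 0 < Real.Gamma (t + a) := Real.Gamma_pos_of_pos (by linarith)
  rw [Real.Gamma_add_one ht.ne', Real.log_mul ht.ne' hΓt.ne'] at h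
  have h2 : Real.log (Real.Gamma (t + a)) ≤ Real.log (Real.Gamma t * t ^ a) := by
    rw [Real.log_mul hΓt.ne' (Real.rpow_pos_of_pos ht a).ne', Real.log_rpow ht]
    linarith
  calc Real.Gamma (t + a) = Real.exp (Real.log (Real.Gamma (t + a))) := (Real.exp_log hΓta).symm
    _ ≤ Real.exp (Real.log (Real.Gamma t * t ^ a)) := Real.exp_le_exp.2 h2
    _ = _ := Real.exp_log (by positivity)

private lemma gautschi_lower {t a : ℝ} (ht : 0 < t) (ha0 : 0 ≤ a) (ha1 : a ≤ 1) :
    Real.Gamma t * t ≤ Real.Gamma (t + a) * (t + a) ^ (1 - a) := by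
  have hta : (0:ℝ) < t + a := by linarith
  have h := Real.convexOn_log_Gamma.2 (Set.mem_Ioi.2 hta)
    (Set.mem_Ioi.2 (by linarith : (0:ℝ) < t + a + 1)) ha0 (by linarith : (0:ℝ) ≤ 1 - a) (by ring)
  simp only [smul_eq_mul, Function.comp_apply] at h
  rw [show a * (t + a) + (1 - a) * (t + a + 1) = t + 1 by ring] at h
  have hΓt : 0 < Real.Gamma t := Real.Gamma_pos_of_pos ht
  have hΓta : 0 < Real.Gamma (t + a) := Real.Gamma_pos_of_pos hta
  rw [Real.Gamma_add_one ht.ne', Real.Gamma_add_one hta.ne',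
    Real.log_mul ht.ne' hΓt.ne', Real.log_mul hta.ne' hΓta.ne'] at h
  have h2 : Real.log (Real.Gamma t * t) ≤ Real.log (Real.Gamma (t + a) * (t + a) ^ (1 - a)) := by
    rw [Real.log_mul hΓt.ne' ht.ne',
      Real.log_mul hΓta.ne' (Real.rpow_pos_of_pos hta _).ne', Real.log_rpow hta]
    linarith
  calc Real.Gamma t * t = Real.exp (Real.log (Real.Gamma t * t)) :=
        (Real.exp_log (by positivity)).symm
    _ ≤ Real.exp (Real.log (Real.Gamma (t + a) * (t + a) ^ (1 - a))) := Real.exp_le_exp.2 h2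
    _ = _ := Real.exp_log (by positivity)

private lemma tendsto_div_add (c : ℝ) :
    Tendsto (fun t : ℝ => t / (t + c)) atTop (nhds 1) := by
  have h : Tendsto (fun t : ℝ => 1 - c / (t + c)) atTop (nhds (1 - 0)) :=
    tendsto_const_nhds.sub (tendsto_const_nhds.div_atTop
      (tendsto_atTop_add_const_right _ c tendsto_id))
  rw [sub_zero] at h
  apply h.congr'
  filter_upwards [eventually_gt_atTop (|c| + 1)] with t ht
  have hc : -|c| ≤ c := neg_abs_le c
  have htc : 0 < t + c := by linarith
  field_simp
  ring

private lemma G_tendsto {α : ℝ} (hα0 : 0 < α) (hα1 : α < 1) :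
    Tendsto (fun t : ℝ => Real.Gamma (t - α) * t ^ α / Real.Gamma t) atTop (nhds 1) := by
  have hlo : Tendsto (fun t : ℝ => (t / (t + (-α))) ^ α) atTop (nhds 1) := by
    have := (tendsto_div_add (-α)).rpow_const (Or.inr hα0.le)
    simpa using this
  have hhi : Tendsto (fun t : ℝ => t / (t + (-α))) atTop (nhds 1) := tendsto_div_add (-α)
  apply tendsto_of_tendsto_of_tendsto_of_le_of_le' hlo hhi
  · -- lower bound : (t/(t-α))^α ≤ G t
    filter_upwards [eventually_gt_atTop 1] with t ht
    have hs : 0 < t - α := by linarith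
    have ht0 : 0 < t := by linarith
    have hΓt : 0 < Real.Gamma t := Real.Gamma_pos_of_pos ht0
    have hΓs : 0 < Real.Gamma (t - α) := Real.Gamma_pos_of_pos hs
    have h := gautschi_upper hs hα0.le hα1.le
    rw [sub_add_cancel] at h
    rw [show t + (-α) = t - α by ring, Real.div_rpow ht0.le hs.le,
      div_le_div_iff₀ (Real.rpow_pos_of_pos hs α) hΓt]
    calc t ^ α * Real.Gamma t ≤ t ^ α * (Real.Gamma (t - α) * (t - α) ^ α) := by
          exact mul_le_mul_of_nonneg_left h (Real.rpow_pos_of_pos ht0 α).le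
      _ = Real.Gamma (t - α) * t ^ α * (t - α) ^ α := by ring
  · -- upper bound : G t ≤ t/(t-α)
    filter_upwards [eventually_gt_atTop 1] with t ht
    have hs : 0 < t - α := by linarith
    have ht0 : 0 < t := by linarith
    have hΓt : 0 < Real.Gamma t := Real.Gamma_pos_of_pos ht0
    have h := gautschi_lower hs hα0.le hα1.le
    rw [sub_add_cancel] at h
    rw [show t + (-α) = t - α by ring, div_le_div_iff₀ hΓt hs]
    have h2 : Real.Gamma (t - α) * (t - α) * t ^ α ≤ Real.Gamma t * t ^ (1 - α) * t ^ α :=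
      mul_le_mul_of_nonneg_right h (Real.rpow_pos_of_pos ht0 α).le
    have h3 : t ^ (1 - α) * t ^ α = t := by
      rw [← Real.rpow_add ht0]; norm_num
    nlinarith [h2, h3]

set_option maxHeartbeats 2000000 in
private lemma key_eq {α : ℝ} (hα0 : 0 < α) (hα1 : α < 1) (n k : ℕ) (hk : 1 ≤ k)
    (hkn : k + 1 ≤ n) :
    (n : ℝ) ^ ((1 : ℝ) + α) *
      ((Real.Gamma ((k : ℝ) - α) / Real.Gamma (1 - α)) *
        (Real.Gamma (((n : ℝ) - (k : ℝ)) - α) / Real.Gamma (1 - α)) /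
        (Real.Gamma ((n : ℝ) - α) / Real.Gamma (1 - α)) *
        (α / 2 * (n.choose k : ℝ) + (1 - 2 * α) * ((n - 2).choose (k - 1) : ℝ)))
    = (1 / Real.Gamma (1 - α)) *
        ((Real.Gamma ((k : ℝ) - α) * (k : ℝ) ^ α / Real.Gamma (k : ℝ)) *
         (Real.Gamma (((n : ℝ) - (k : ℝ)) - α) * ((n : ℝ) - (k : ℝ)) ^ α /
            Real.Gamma ((n : ℝ) - (k : ℝ))) /
         (Real.Gamma ((n : ℝ) - α) * (n : ℝ) ^ α / Real.Gamma (n : ℝ))) *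
        (α / 2 * (((k : ℝ) / (n : ℝ)) * (((n : ℝ) - (k : ℝ)) / (n : ℝ))) ^ (-α - 1)
          + (1 - 2 * α) * ((n : ℝ) / ((n : ℝ) - 1)) *
            (((k : ℝ) / (n : ℝ)) * (((n : ℝ) - (k : ℝ)) / (n : ℝ))) ^ (-α)) := by
  have hkn' : k ≤ n := by omega
  have hn2 : 2 ≤ n := by omega
  -- real abbreviations
  set c : ℝ := (k : ℝ) with hc
  set N : ℝ := (n : ℝ) with hN
  have hc1 : (1:ℝ) ≤ c := by rw [hc]; exact_mod_cast hk
  have hN2 : (2:ℝ) ≤ N := by rw [hN]; exact_mod_cast hn2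
  have hcN : c + 1 ≤ N := by rw [hc, hN]; exact_mod_cast hkn
  have hc0 : 0 < c := by linarith
  have hN0 : 0 < N := by linarith
  have hd0 : 0 < N - c := by linarith
  -- choose to Gamma
  have hchoose1 : (n.choose k : ℝ) = N * Real.Gamma N / (c * Real.Gamma c * ((N - c) * Real.Gamma (N - c))) := by
    rw [Nat.cast_choose ℝ hkn']
    rw [← Real.Gamma_nat_eq_factorial n, ← Real.Gamma_nat_eq_factorial k,
      ← Real.Gamma_nat_eq_factorial (n - k)]
    rw [Real.Gamma_add_one hN0.ne', Real.Gamma_add_one hc0.ne']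
    rw [Nat.cast_sub hkn', Real.Gamma_add_one hd0.ne']
  have hNk1 : n - 2 - (k - 1) = n - k - 1 := by omega
  have hchoose2 : ((n - 2).choose (k - 1) : ℝ)
      = (Real.Gamma N / (N - 1)) / (Real.Gamma c * Real.Gamma (N - c)) := by
    rw [Nat.cast_choose ℝ (by omega : k - 1 ≤ n - 2), hNk1]
    rw [← Real.Gamma_nat_eq_factorial (n - 2), ← Real.Gamma_nat_eq_factorial (k - 1),
      ← Real.Gamma_nat_eq_factorial (n - k - 1)]
    have e1 : ((n - 2 : ℕ) : ℝ) + 1 = N - 1 := by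
      rw [Nat.cast_sub hn2]; push_cast; ring
    have e2 : ((k - 1 : ℕ) : ℝ) + 1 = c := by
      rw [Nat.cast_sub hk]; push_cast; ring
    have e3 : ((n - k - 1 : ℕ) : ℝ) + 1 = N - c := by
      rw [Nat.cast_sub (by omega : 1 ≤ n - k), Nat.cast_sub hkn']; push_cast; ring
    rw [e1, e2, e3]
    have hΓN : Real.Gamma N = (N - 1) * Real.Gamma (N - 1) := by
      have := Real.Gamma_add_one (sub_ne_zero.mpr (by linarith : N ≠ 1))
      rw [sub_add_cancel] at this
      exact this
    rw [hΓN]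
    have h1 : N - 1 ≠ 0 := by intro h; linarith
    field_simp
  -- rpow identities
  set u : ℝ := (c / N) * ((N - c) / N) with hu
  have hu0 : 0 < u := by positivity
  have hua : u ^ α = (c ^ α / N ^ α) * ((N - c) ^ α / N ^ α) := by
    rw [hu, Real.mul_rpow (by positivity) (by positivity),
      Real.div_rpow hc0.le hN0.le, Real.div_rpow hd0.le hN0.le]
  have hu1 : u ^ (-α) = (u ^ α)⁻¹ := Real.rpow_neg hu0.le α
  have hu2 : u ^ (-α - 1) = (u ^ α * u)⁻¹ := by
    rw [show -α - 1 = -(α + 1) by ring, Real.rpow_neg hu0.le, Real.rpow_add_one hu0.ne']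
  have hNpow : N ^ ((1:ℝ) + α) = N * N ^ α := by
    rw [Real.rpow_add hN0, Real.rpow_one]
  -- positivity of the gamma atoms
  have hΓ1α : 0 < Real.Gamma (1 - α) := Real.Gamma_pos_of_pos (by linarith)
  have hΓc : 0 < Real.Gamma c := Real.Gamma_pos_of_pos hc0
  have hΓd : 0 < Real.Gamma (N - c) := Real.Gamma_pos_of_pos hd0
  have hΓN : 0 < Real.Gamma N := Real.Gamma_pos_of_pos hN0
  have hcα : 0 < c ^ α := Real.rpow_pos_of_pos hc0 α
  have hdα : 0 < (N - c) ^ α := Real.rpow_pos_of_pos hd0 α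
  have hNα : 0 < N ^ α := Real.rpow_pos_of_pos hN0 α
  have hN1 : (0:ℝ) < N - 1 := by linarith
  have hΓNα : 0 < Real.Gamma (N - α) := Real.Gamma_pos_of_pos (by linarith)
  have term1 : N ^ ((1:ℝ) + α) *
      ((Real.Gamma (c - α) / Real.Gamma (1 - α)) *
        (Real.Gamma ((N - c) - α) / Real.Gamma (1 - α)) /
        (Real.Gamma (N - α) / Real.Gamma (1 - α)) * (α / 2 * (n.choose k : ℝ)))
      = (1 / Real.Gamma (1 - α)) *
        ((Real.Gamma (c - α) * c ^ α / Real.Gamma c) *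
         (Real.Gamma ((N - c) - α) * (N - c) ^ α / Real.Gamma (N - c)) /
         (Real.Gamma (N - α) * N ^ α / Real.Gamma N)) * (α / 2 * u ^ (-α - 1)) := by
    rw [hchoose1, hu2, hua, hNpow, hu]
    field_simp [hΓ1α.ne', hΓc.ne', hΓd.ne', hΓN.ne', hΓNα.ne', hcα.ne', hdα.ne', hNα.ne',
      hc0.ne', hN0.ne', hd0.ne']
  have term2 : N ^ ((1:ℝ) + α) *
      ((Real.Gamma (c - α) / Real.Gamma (1 - α)) *
        (Real.Gamma ((N - c) - α) / Real.Gamma (1 - α)) /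
        (Real.Gamma (N - α) / Real.Gamma (1 - α)) *
        ((1 - 2 * α) * ((n - 2).choose (k - 1) : ℝ)))
      = (1 / Real.Gamma (1 - α)) *
        ((Real.Gamma (c - α) * c ^ α / Real.Gamma c) *
         (Real.Gamma ((N - c) - α) * (N - c) ^ α / Real.Gamma (N - c)) /
         (Real.Gamma (N - α) * N ^ α / Real.Gamma N)) *
        ((1 - 2 * α) * (N / (N - 1)) * u ^ (-α)) := by
    rw [hchoose2, hu1, hua, hNpow]
    field_simp [hΓ1α.ne', hΓc.ne', hΓd.ne', hΓN.ne', hΓNα.ne', hcα.ne', hdα.ne', hNα.ne',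
      hc0.ne', hN0.ne', hd0.ne', hN1.ne']
  linear_combination term1 + term2

/-- Ford's splitting weights `q̃_n(k) = (Γ_α(k)Γ_α(n-k)/Γ_α(n))((α/2)C(n,k) + (1-2α)C(n-2,k-1))`
with `Γ_α(m) = Γ(m-α)/Γ(1-α)` satisfy `n^{1+α} q̃_n(⌊xn⌋) → f_α(x)` as `n → ∞`,
where `f_α(x) = (1/Γ(1-α))((α/2)(x(1-x))^{-α-1} + (1-2α)(x(1-x))^{-α})`. -/
theorem stmt_15 (α x : ℝ) (hα0 : 0 < α) (hα1 : α < 1) (hx0 : 0 < x) (hx1 : x < 1) :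
    Tendsto (fun n : ℕ =>
        (n : ℝ) ^ ((1 : ℝ) + α) *
          ((Real.Gamma ((⌊x * n⌋₊ : ℝ) - α) / Real.Gamma (1 - α)) *
            (Real.Gamma (((n : ℝ) - (⌊x * n⌋₊ : ℝ)) - α) / Real.Gamma (1 - α)) /
            (Real.Gamma ((n : ℝ) - α) / Real.Gamma (1 - α)) *
            (α / 2 * (n.choose ⌊x * n⌋₊ : ℝ)
              + (1 - 2 * α) * ((n - 2).choose (⌊x * n⌋₊ - 1) : ℝ))))
      atTop
      (nhds ((1 / Real.Gamma (1 - α)) *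
        (α / 2 * (x * (1 - x)) ^ (-α - 1) + (1 - 2 * α) * (x * (1 - x)) ^ (-α)))) := by
  have hk_atTop : Tendsto (fun n : ℕ => ((⌊x * n⌋₊ : ℝ))) atTop atTop :=
    tendsto_natCast_atTop_atTop.comp (tendsto_nat_floor_mul_atTop x hx0)
  have hN_atTop : Tendsto (fun n : ℕ => (n : ℝ)) atTop atTop := tendsto_natCast_atTop_atTop
  have hd_atTop : Tendsto (fun n : ℕ => (n : ℝ) - (⌊x * n⌋₊ : ℝ)) atTop atTop := by
    apply tendsto_atTop_mono' _ _ ((tendsto_natCast_atTop_atTop (R := ℝ)).const_mul_atTop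
      (by linarith : (0:ℝ) < 1 - x))
    filter_upwards [eventually_ge_atTop 0] with n _
    have := Nat.floor_le (by positivity : (0:ℝ) ≤ x * n)
    nlinarith
  have hratio : Tendsto (fun n : ℕ => (⌊x * n⌋₊ : ℝ) / n) atTop (nhds x) :=
    (tendsto_nat_floor_mul_div_atTop hx0.le).comp tendsto_natCast_atTop_atTop
  have hdratio : Tendsto (fun n : ℕ => ((n : ℝ) - (⌊x * n⌋₊ : ℝ)) / n) atTop (nhds (1 - x)) := by
    apply Tendsto.congr' _ (tendsto_const_nhds.sub hratio)
    filter_upwards [eventually_ge_atTop 1] with n hn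
    have hn0 : (n : ℝ) ≠ 0 := by positivity
    field_simp
  have hu : Tendsto (fun n : ℕ => ((⌊x * n⌋₊ : ℝ) / n) * (((n : ℝ) - (⌊x * n⌋₊ : ℝ)) / n))
      atTop (nhds (x * (1 - x))) := hratio.mul hdratio
  have hxx : (0:ℝ) < x * (1 - x) := by nlinarith
  have hG := G_tendsto hα0 hα1
  have hGk := hG.comp hk_atTop
  have hGd := hG.comp hd_atTop
  have hGn := hG.comp hN_atTop
  have hNdiv : Tendsto (fun n : ℕ => (n : ℝ) / ((n : ℝ) - 1)) atTop (nhds 1) := by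
    have := tendsto_natCast_div_add_atTop (-1 : ℝ)
    simpa [sub_eq_add_neg] using this
  have hmain := (tendsto_const_nhds (x := (1 / Real.Gamma (1 - α)))).mul
      ((hGk.mul hGd).div hGn one_ne_zero) |>.mul
    (((tendsto_const_nhds (x := α / 2)).mul (hu.rpow_const (p := -α - 1) (Or.inl hxx.ne'))).add
      (((tendsto_const_nhds (x := 1 - 2 * α)).mul hNdiv).mul
        (hu.rpow_const (p := -α) (Or.inl hxx.ne'))))
  have hval : (1 / Real.Gamma (1 - α)) * (1 * 1 / 1) *
      (α / 2 * (x * (1 - x)) ^ (-α - 1) + (1 - 2 * α) * 1 * (x * (1 - x)) ^ (-α))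
      = (1 / Real.Gamma (1 - α)) *
        (α / 2 * (x * (1 - x)) ^ (-α - 1) + (1 - 2 * α) * (x * (1 - x)) ^ (-α)) := by
    ring
  rw [← hval]
  apply Tendsto.congr' _ hmain
  have hev1 : ∀ᶠ n : ℕ in atTop, 1 ≤ ⌊x * n⌋₊ :=
    (tendsto_nat_floor_mul_atTop x hx0).eventually_ge_atTop 1
  have hev2 : ∀ᶠ n : ℕ in atTop, ⌊x * n⌋₊ + 1 ≤ n := by
    have h1x : Tendsto (fun n : ℕ => (1 - x) * (n : ℝ)) atTop atTop :=
      (tendsto_natCast_atTop_atTop (R := ℝ)).const_mul_atTop (by linarith)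
    filter_upwards [h1x.eventually_ge_atTop 1] with n hn
    have hfl := Nat.floor_le (by positivity : (0:ℝ) ≤ x * n)
    have : ((⌊x * n⌋₊ : ℝ)) + 1 ≤ (n : ℝ) := by nlinarith
    exact_mod_cast this
  filter_upwards [hev1, hev2] with n h1 h2
  exact (key_eq hα0 hα1 n ⌊x * n⌋₊ h1 h2).symm
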